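/- arXiv:1603.01370 — 2 statements merged into one kernel-verified Lean document; each statement's English description precedes it below -/
import Mathlib

section
/- If T is a bounded operator on K_Θ such that S_Θ*ⁿ T S_Θⁿ converges in operator norm, then T = T₁ + K where K is compact on K_Θ and T₁ satisfies S_Θ* T₁ S_Θ = T₁. -/
noncomputable section

open Complex Filter Topology ContinuousLinearMap
open scoped ENNReal

/-- The Hardy space `H²`, modeled as the space of square-summable Taylor coefficient
sequences. -/
abbrev H2 : Type := lp (fun _ : ℕ => ℂ) 2

/-- The shifted coefficient sequence, i.e. the Taylor coefficients of `z • f`. -/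
def shiftFun (f : ∀ _ : ℕ, ℂ) : ∀ _ : ℕ, ℂ
  | 0 => 0
  | n + 1 => f n

lemma shiftFun_memℓp (f : H2) : Memℓp (shiftFun f) 2 := by
  apply memℓp_gen
  have hf : Summable fun n => ‖(f : ∀ _ : ℕ, ℂ) n‖ ^ (2 : ℝ≥0∞).toReal :=
    Memℓp.summable (by norm_num) (lp.memℓp f)
  refine (summable_nat_add_iff 1).1 ?_
  simpa [shiftFun] using hf

lemma shiftFun_tsum (f : H2) :
    (∑' n, ‖shiftFun f n‖ ^ (2 : ℝ≥0∞).toReal)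
      = ∑' n, ‖(f : ∀ _ : ℕ, ℂ) n‖ ^ (2 : ℝ≥0∞).toReal := by
  rw [Summable.tsum_eq_zero_add ((shiftFun_memℓp f).summable (by norm_num))]
  simp [shiftFun]

/-- The unilateral shift `S f = z • f` on `H²`. -/
def shift : H2 →L[ℂ] H2 := by
  refine LinearMap.mkContinuous
    { toFun := fun f => ⟨shiftFun f, shiftFun_memℓp f⟩
      map_add' := ?_
      map_smul' := ?_ } 1 ?_
  · intro f g; ext n; cases n <;> simp [shiftFun] <;> first | exact (add_zero 0).symm | rfl
  · intro c f; ext n; cases n <;> simp [shiftFun]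
  · intro f
    rw [one_mul]
    apply le_of_eq
    rw [lp.norm_eq_tsum_rpow (by norm_num) , lp.norm_eq_tsum_rpow (by norm_num) f]
    congr 1
    exact shiftFun_tsum f

/-- An inner function `Θ`, encoded by the multiplication operator `f ↦ Θ f` on `H²`:
an operator commutes with the shift iff it is multiplication by a bounded analytic
function `Θ`, and this multiplication is isometric on `H²` iff `Θ` is inner. -/
structure InnerFunction where
  /-- The multiplication operator `f ↦ Θ f` on `H²`. -/
  mul : H2 →L[ℂ] H2
  /-- Multiplication by `Θ` commutes with the shift (i.e. `Θ ∈ H^∞`). -/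
  comm : mul ∘L shift = shift ∘L mul
  /-- `Θ` has unimodular boundary values a.e., i.e. multiplication by `Θ` is isometric. -/
  isom : ∀ f : H2, ‖mul f‖ = ‖f‖

/-- The subspace `Θ H²` of `H²`. -/
def thetaH2 (Θ : InnerFunction) : Submodule ℂ H2 := LinearMap.range (Θ.mul : H2 →ₗ[ℂ] H2)

/-- The model space `K_Θ = H² ⊖ Θ H²`. -/
def Ksp (Θ : InnerFunction) : Submodule ℂ H2 := (thetaH2 Θ)ᗮ

instance (Θ : InnerFunction) : CompleteSpace (Ksp Θ) :=
  (Submodule.isClosed_orthogonal _).completeSpace_coe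

/-- The orthogonal projection `P_Θ` of `H²` onto the model space `K_Θ`. -/
def projK (Θ : InnerFunction) : H2 →L[ℂ] Ksp Θ := Submodule.orthogonalProjectionOnto (Ksp Θ)

/-- The compressed shift `S_Θ = P_Θ S |_{K_Θ}` on the model space. -/
def Sc (Θ : InnerFunction) : Ksp Θ →L[ℂ] Ksp Θ :=
  projK Θ ∘L (shift ∘L (Ksp Θ).subtypeL)

/-- The constant function `1 ∈ H²`. -/
def one' : H2 := lp.single 2 0 1

/-- Evaluation of (the analytic extension of) `f ∈ H²` at a point `λ` of the disk:
`f(λ) = ∑ aₙ λⁿ`. -/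
def evalAt (f : H2) (l : ℂ) : ℂ := ∑' n : ℕ, (f : ∀ _ : ℕ, ℂ) n * l ^ n

/-- The value `Θ(λ)` of the inner function at a point of the disk. -/
def IFval (Θ : InnerFunction) (l : ℂ) : ℂ := evalAt (Θ.mul one') l

/-- The Szegő (Cauchy) kernel `c_λ(z) = 1/(1 - conj(λ) z)`, with Taylor coefficients
`conj(λ)ⁿ`, as an element of `H²`. -/
def szego (l : ℂ) : H2 := ∑' n : ℕ, (starRingEnd ℂ l) ^ n • lp.single 2 n 1

/-- The reproducing kernel `k_λ = P_Θ c_λ` of `K_Θ`,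
`k_λ(z) = (1 - conj(Θ(λ)) Θ(z))/(1 - conj(λ) z)`. -/
def kern (Θ : InnerFunction) (l : ℂ) : Ksp Θ := projK Θ (szego l)

/-- The reproducing kernel of `K_Θ` at `0`, `k₀(z) = 1 - conj(Θ(0)) Θ(z)`. -/
def kern0 (Θ : InnerFunction) : Ksp Θ := projK Θ one'

/-- The conjugate kernel `k̃_λ(z) = (Θ(z) - Θ(λ))/(z - λ)`, an element of `K_Θ`.
In terms of the backward shift, `k̃_λ = ∑_j λ^j S*^(j+1) Θ`, which lies in `K_Θ`
(so applying `P_Θ` does not change it). -/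
def ckern (Θ : InnerFunction) (l : ℂ) : Ksp Θ :=
  projK Θ (∑' j : ℕ, l ^ j • ((ContinuousLinearMap.adjoint shift) ^ (j + 1)) (Θ.mul one'))

/-- The rank-one operator `(u ⊗ v) f = ⟨f, v⟩ u` (inner product linear in `f`). -/
def rankOne {E : Type*} [NormedAddCommGroup E] [InnerProductSpace ℂ E]
    (u v : E) : E →L[ℂ] E := (innerSL ℂ v).smulRight u

/-!
The compressed shift `S = S_Θ` is a contraction and `1 - S S* = k₀ ⊗ k₀` has rank one, so every
defect `1 - Sⁿ S*ⁿ = (1 - S S*) + S (1 - Sⁿ⁻¹ S*ⁿ⁻¹) S*` is compact. If `S*ⁿ T Sⁿ → A`, then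
`S* (S*ⁿ T Sⁿ) S` has both limits `S* A S` and `A`, so `S*ⁿ A Sⁿ = A` for all `n`. With
`P = Sⁿ S*ⁿ` this gives `T - A - Sⁿ (S*ⁿ T Sⁿ - A) S*ⁿ = (1 - P)(T - A) + P (T - A)(1 - P)`,
which is compact, while the subtracted term has norm at most `‖S*ⁿ T Sⁿ - A‖ → 0`. Hence `T - A`
is compact, and `T = A + (T - A)` is the decomposition.
-/

open scoped InnerProductSpace

section ContractionPowers

variable {α : Type*}

lemma pow_mul_mul_pow_eq_of_mul_mul_eq [Monoid α] {r s a : α} (h : r * (a * s) = a) (n : ℕ) :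
    r ^ n * (a * s ^ n) = a := by
  induction n with
  | zero => simp
  | succ n ih =>
    calc r ^ (n + 1) * (a * s ^ (n + 1)) = r ^ n * ((r * (a * s)) * s ^ n) := by
          rw [pow_succ r, pow_succ' s]; simp only [mul_assoc]
      _ = a := by rw [h, ih]

lemma norm_pow_mul_mul_pow_le [SeminormedRing α] {r s : α} (hr : ‖r‖ ≤ 1) (hs : ‖s‖ ≤ 1)
    (a : α) (n : ℕ) : ‖r ^ n * (a * s ^ n)‖ ≤ ‖a‖ := by
  induction n with
  | zero => simp
  | succ n ih =>
    calc ‖r ^ (n + 1) * (a * s ^ (n + 1))‖ = ‖r * ((r ^ n * (a * s ^ n)) * s)‖ := by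
          rw [pow_succ' r, pow_succ s]; simp only [mul_assoc]
      _ ≤ ‖r‖ * (‖r ^ n * (a * s ^ n)‖ * ‖s‖) :=
          (norm_mul_le _ _).trans (by gcongr; exact norm_mul_le _ _)
      _ ≤ 1 * (‖a‖ * 1) := by gcongr
      _ = ‖a‖ := by ring

end ContractionPowers

section Operators

variable {𝕜 E : Type*} [NontriviallyNormedField 𝕜] [NormedAddCommGroup E] [NormedSpace 𝕜 E]

lemma mul_mul_eq_of_tendsto_pow_mul_mul_pow {r s t a : E →L[𝕜] E}
    (h : Tendsto (fun n : ℕ => r ^ n * (t * s ^ n)) atTop (𝓝 a)) : r * (a * s) = a := by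
  have hshift : Tendsto (fun n : ℕ => r * ((r ^ n * (t * s ^ n)) * s)) atTop (𝓝 (r * (a * s))) :=
    (continuous_const.mul (continuous_id.mul continuous_const)).continuousAt.tendsto.comp h
  refine tendsto_nhds_unique ?_ (h.comp (tendsto_add_atTop_nat 1))
  convert hshift using 2 with n
  rw [Function.comp_apply, pow_succ' r, pow_succ s]; simp only [mul_assoc]

lemma isCompactOperator_one_sub_pow_mul_pow {s r : E →L[𝕜] E}
    (h : IsCompactOperator ((1 : E →L[𝕜] E) - s * r)) (n : ℕ) :
    IsCompactOperator ((1 : E →L[𝕜] E) - s ^ n * r ^ n) := by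
  induction n with
  | zero => simpa using isCompactOperator_zero
  | succ n ih =>
    have hsplit : (1 : E →L[𝕜] E) - s ^ (n + 1) * r ^ (n + 1)
        = (1 - s * r) + s * ((1 - s ^ n * r ^ n) * r) := by
      rw [pow_succ' s, pow_succ r]
      simp only [mul_sub, sub_mul, one_mul, mul_assoc]
      abel
    rw [hsplit, FunLike.coe_add]
    exact h.add ((ih.comp_clm r).clm_comp s)

lemma isCompactOperator_sub_of_tendsto_pow_mul_mul_pow [CompleteSpace E] {s r t a : E →L[𝕜] E}
    (hs : ‖s‖ ≤ 1) (hr : ‖r‖ ≤ 1) (hdefect : IsCompactOperator ((1 : E →L[𝕜] E) - s * r))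
    (h : Tendsto (fun n : ℕ => r ^ n * (t * s ^ n)) atTop (𝓝 a)) :
    IsCompactOperator (t - a) := by
  have hfix := pow_mul_mul_pow_eq_of_mul_mul_eq (mul_mul_eq_of_tendsto_pow_mul_mul_pow h)
  set err : ℕ → E →L[𝕜] E := fun n => s ^ n * ((r ^ n * (t * s ^ n) - a) * r ^ n)
  have herr : Tendsto err atTop (𝓝 0) := by
    refine squeeze_zero_norm (fun n => norm_pow_mul_mul_pow_le hs hr _ n) ?_
    exact (tendsto_iff_norm_sub_tendsto_zero).1 h
  have hcompact : ∀ n, IsCompactOperator (t - a - err n) := by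
    intro n
    have hsplit : t - a - err n = (1 - s ^ n * r ^ n) * (t - a)
        + s ^ n * r ^ n * (t - a) * (1 - s ^ n * r ^ n) := by
      have : a * r ^ n = r ^ n * (a * (s ^ n * r ^ n)) := by
        conv_lhs => rw [← hfix n]
        simp only [mul_assoc]
      simp only [err, sub_mul, mul_sub, one_mul, mul_one, mul_assoc, this]
      abel
    rw [hsplit, FunLike.coe_add]
    exact ((isCompactOperator_one_sub_pow_mul_pow hdefect n).comp_clm _).add
      ((isCompactOperator_one_sub_pow_mul_pow hdefect n).clm_comp (s ^ n * r ^ n * (t - a)))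
  have hlim : Tendsto (fun n => t - a - err n) atTop (𝓝 (t - a)) := by
    simpa using tendsto_const_nhds.sub herr
  exact isCompactOperator_of_tendsto hlim (.of_forall hcompact)

end Operators

lemma isCompactOperator_rankOne {E : Type*} [NormedAddCommGroup E] [InnerProductSpace ℂ E]
    (u v : E) : IsCompactOperator (rankOne u v) :=
  (isCompactOperator_of_locallyCompactSpace_rng (toSpanSingleton ℂ u)).comp_clm (innerSL ℂ v)

lemma shift_apply_zero (f : H2) : shift f 0 = 0 := rfl

lemma shift_apply_succ (f : H2) (n : ℕ) : shift f (n + 1) = f n := rfl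

lemma shift_single (n : ℕ) : shift (lp.single 2 n 1) = lp.single 2 (n + 1) 1 := by
  ext m
  rcases m with _ | m
  · simp [shift_apply_zero]
  · simp [shift_apply_succ, Pi.single_apply]

lemma adjoint_shift_apply (f : H2) (n : ℕ) : adjoint shift f n = f (n + 1) := by
  have hcoord : ∀ (g : H2) (k : ℕ), ⟪lp.single 2 k (1 : ℂ), g⟫_ℂ = g k := by
    simp [lp.inner_single_left]
  rw [← hcoord, adjoint_inner_right, shift_single, hcoord]

lemma shift_adjoint_shift_apply (f : H2) : shift (adjoint shift f) = f - f 0 • one' := by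
  ext n
  rw [lp.coeFn_sub, lp.coeFn_smul, Pi.sub_apply, Pi.smul_apply]
  rcases n with _ | n
  · simp [shift_apply_zero, one']
  · simp [shift_apply_succ, adjoint_shift_apply, one']

lemma adjoint_shift_mem_Ksp (Θ : InnerFunction) {f : H2} (hf : f ∈ Ksp Θ) :
    adjoint shift f ∈ Ksp Θ := by
  rintro _ ⟨g, rfl⟩
  change ⟪Θ.mul g, adjoint shift f⟫_ℂ = 0
  rw [adjoint_inner_right, ← comp_apply, ← Θ.comm]
  exact hf _ ⟨shift g, rfl⟩

lemma Sc_apply (Θ : InnerFunction) (f : Ksp Θ) : Sc Θ f = projK Θ (shift f) := rfl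

lemma coe_adjoint_Sc_apply (Θ : InnerFunction) (f : Ksp Θ) :
    (adjoint (Sc Θ) f : H2) = adjoint shift f := by
  rw [Sc, adjoint_comp, adjoint_comp, Submodule.adjoint_subtypeL, projK,
    Submodule.adjoint_orthogonalProjectionOnto]
  exact Submodule.starProjection_eq_self_iff.2 (adjoint_shift_mem_Ksp Θ f.2)

lemma inner_kern0_left (Θ : InnerFunction) (f : Ksp Θ) : ⟪kern0 Θ, f⟫_ℂ = (f : H2) 0 := by
  simp [kern0, projK, one', lp.inner_single_left]

lemma one_sub_Sc_mul_adjoint_Sc (Θ : InnerFunction) :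
    1 - Sc Θ * adjoint (Sc Θ) = rankOne (kern0 Θ) (kern0 Θ) := by
  ext1 f
  have hSS : Sc Θ (adjoint (Sc Θ) f) = f - (f : H2) 0 • kern0 Θ := by
    rw [Sc_apply, coe_adjoint_Sc_apply, shift_adjoint_shift_apply, map_sub, map_smul, projK,
      Submodule.orthogonalProjectionOnto_mem_subspace_eq_self]
    rfl
  change f - Sc Θ (adjoint (Sc Θ) f) = ⟪kern0 Θ, f⟫_ℂ • kern0 Θ
  rw [hSS, sub_sub_cancel, inner_kern0_left]

lemma norm_Sc_le_one (Θ : InnerFunction) : ‖Sc Θ‖ ≤ 1 := by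
  have hshift : ‖shift‖ ≤ 1 := LinearMap.mkContinuous_norm_le _ zero_le_one _
  calc ‖Sc Θ‖ ≤ ‖projK Θ‖ * (‖shift‖ * ‖(Ksp Θ).subtypeL‖) :=
        (opNorm_comp_le _ _).trans (by gcongr; exact opNorm_comp_le _ _)
    _ ≤ 1 * (1 * 1) := by
        gcongr
        · exact Submodule.orthogonalProjectionOnto_norm_le _
        · exact Submodule.norm_subtypeL_le _
    _ = 1 := by norm_num

/-- If `S_Θ*ⁿ T S_Θⁿ` converges in operator norm then `T = T₁ + K` with `K` compact
and `S_Θ* T₁ S_Θ = T₁`. -/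
theorem uniformly_asymptotically_toeplitz_decomposition (Θ : InnerFunction)
    (T : Ksp Θ →L[ℂ] Ksp Θ)
    (h : ∃ A : Ksp Θ →L[ℂ] Ksp Θ, Filter.Tendsto
      (fun n : ℕ => ((ContinuousLinearMap.adjoint (Sc Θ)) ^ n) ∘L T ∘L ((Sc Θ) ^ n))
      Filter.atTop (nhds A)) :
    ∃ T₁ K : Ksp Θ →L[ℂ] Ksp Θ, IsCompactOperator K ∧
      ContinuousLinearMap.adjoint (Sc Θ) ∘L T₁ ∘L Sc Θ = T₁ ∧ T = T₁ + K := by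
  obtain ⟨A, hA⟩ := h
  have hdefect : IsCompactOperator ((1 : Ksp Θ →L[ℂ] Ksp Θ) - Sc Θ * adjoint (Sc Θ)) := by
    rw [one_sub_Sc_mul_adjoint_Sc]
    exact isCompactOperator_rankOne _ _
  have hadjoint : ‖adjoint (Sc Θ)‖ ≤ 1 := (adjoint.norm_map _).trans_le (norm_Sc_le_one Θ)
  exact ⟨A, T - A,
    isCompactOperator_sub_of_tendsto_pow_mul_mul_pow (norm_Sc_le_one Θ) hadjoint hdefect hA,
    mul_mul_eq_of_tendsto_pow_mul_mul_pow hA, (add_sub_cancel A T).symm⟩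
end
end

section
/- Let C be a power-bounded operator on a Hilbert space H with sup_n ‖Cⁿ‖ ≤ 1, and suppose C*ⁿ → 0 strongly. Then the set of bounded operators A on H for which C*ⁿ A Cⁿ converges in operator norm is exactly {A₁ + K : C* A₁ C = A₁, K compact}. -/
noncomputable section

open Filter Topology ContinuousLinearMap Metric

private lemma sandwich_norm {H : Type*} [NormedAddCommGroup H] [InnerProductSpace ℂ H]
    {a b c : H →L[ℂ] H} (ha : ‖a‖ ≤ 1) (hc : ‖c‖ ≤ 1) : ‖a * b * c‖ ≤ ‖b‖ := by
  calc ‖a * b * c‖ ≤ ‖a‖ * ‖b‖ * ‖c‖ :=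
        (norm_mul_le _ _).trans (mul_le_mul_of_nonneg_right (norm_mul_le a b) (norm_nonneg c))
    _ ≤ 1 * ‖b‖ * 1 := by gcongr
    _ = ‖b‖ := by ring

/-- If `T n → 0` strongly with `‖T n‖ ≤ 1` and `K` is compact, then `‖T n ∘L K‖ → 0`. -/
private lemma norm_comp_compact_tendsto_zero {H : Type*} [NormedAddCommGroup H]
    [InnerProductSpace ℂ H] [CompleteSpace H] (T : ℕ → H →L[ℂ] H) (hT : ∀ n, ‖T n‖ ≤ 1)
    (hTs : ∀ f : H, Tendsto (fun n => ‖T n f‖) atTop (𝓝 0))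
    (K : H →L[ℂ] H) (hK : IsCompactOperator K) :
    Tendsto (fun n => ‖T n ∘L K‖) atTop (𝓝 0) := by
  have h0 : ∀ ε > (0 : ℝ), ∀ᶠ n in atTop, ‖T n ∘L K‖ < ε := by
    intro ε hε
    have hS : IsCompact (closure (K '' closedBall (0 : H) 1)) :=
      hK.isCompact_closure_image_closedBall 1
    obtain ⟨t, htf, hcover⟩ := totallyBounded_iff.mp hS.totallyBounded (ε / 3) (by positivity)
    have hev : ∀ᶠ n in atTop, ∀ y ∈ t, ‖T n y‖ < ε / 3 :=
      (eventually_all_finite htf).2 fun y _ =>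
        (hTs y).eventually_lt_const (by positivity)
    filter_upwards [hev] with n hn
    have hb : ∀ x : H, ‖x‖ ≤ 1 → ‖T n (K x)‖ ≤ 2 * (ε / 3) := by
      intro x hx
      have hKx : K x ∈ closure (K '' closedBall (0 : H) 1) :=
        subset_closure ⟨x, by simpa [mem_closedBall, dist_zero_right] using hx, rfl⟩
      obtain ⟨y, hy, hdy⟩ : ∃ y ∈ t, K x ∈ ball y (ε / 3) := by
        simpa using hcover hKx
      have h1 : ‖K x - y‖ < ε / 3 := by
        rw [← dist_eq_norm]; exact hdy
      have h2 : ‖T n (K x - y)‖ ≤ ‖T n‖ * ‖K x - y‖ := le_opNorm _ _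
      have h3 : T n (K x) = T n (K x - y) + T n y := by
        rw [map_sub]; abel
      calc ‖T n (K x)‖ ≤ ‖T n (K x - y)‖ + ‖T n y‖ := by rw [h3]; exact norm_add_le _ _
        _ ≤ ‖T n‖ * ‖K x - y‖ + ε / 3 := add_le_add h2 (hn y hy).le
        _ ≤ 1 * (ε / 3) + ε / 3 := by
            have := hT n
            gcongr
        _ = 2 * (ε / 3) := by ring
    have hb2 : ‖T n ∘L K‖ ≤ 2 * (ε / 3) := by
      refine opNorm_le_bound _ (by positivity) fun x => ?_
      rcases eq_or_ne x 0 with rfl | hx0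
      · simp
      · have hxpos : (0 : ℝ) < ‖x‖ := norm_pos_iff.2 hx0
        set u : H := (‖x‖⁻¹ : ℝ) • x with hu
        have hnu : ‖u‖ ≤ 1 := by
          rw [hu, norm_smul]
          simp [abs_of_nonneg (inv_nonneg.2 hxpos.le), inv_mul_cancel₀ hxpos.ne']
        have hxu : x = (‖x‖ : ℝ) • u := by
          rw [hu, smul_smul, mul_inv_cancel₀ hxpos.ne', one_smul]
        calc ‖(T n ∘L K) x‖ = ‖x‖ * ‖(T n ∘L K) u‖ := by
              conv_lhs => rw [hxu]
              rw [map_smul_of_tower, norm_smul]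
              simp [abs_of_nonneg hxpos.le]
          _ ≤ ‖x‖ * (2 * (ε / 3)) := by
              gcongr
              exact hb u hnu
          _ = 2 * (ε / 3) * ‖x‖ := by ring
    linarith
  rw [Metric.tendsto_atTop]
  intro ε hε
  obtain ⟨N, hN⟩ := eventually_atTop.mp (h0 ε hε)
  exact ⟨N, fun n hn => by
    rw [Real.dist_eq, sub_zero, abs_of_nonneg (norm_nonneg _)]
    exact hN n hn⟩

/-- For a contraction `C` with `sup ‖Cⁿ‖ ≤ 1`, `C*ⁿ → 0` strongly and each
`I − Cⁿ C*ⁿ` compact, the operators `A` for which `C*ⁿ A Cⁿ` converges in operator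
norm are exactly those of the form `A₁ + K` with `C* A₁ C = A₁` and `K` compact. -/
theorem uniformly_asymptotically_toeplitz_characterization
    {H : Type*} [NormedAddCommGroup H] [InnerProductSpace ℂ H] [CompleteSpace H]
    (C : H →L[ℂ] H) (hC : ∀ n : ℕ, ‖C ^ n‖ ≤ 1)
    (hCadj : ∀ f : H,
      Tendsto (fun n : ℕ => ‖((ContinuousLinearMap.adjoint C) ^ n) f‖) atTop (𝓝 0))
    (hdefect : ∀ n : ℕ,
      IsCompactOperator
        ((1 : H →L[ℂ] H) - (C ^ n) ∘L ((ContinuousLinearMap.adjoint C) ^ n)))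
    (A : H →L[ℂ] H) :
    (∃ L : H →L[ℂ] H, Tendsto
        (fun n : ℕ => ((ContinuousLinearMap.adjoint C) ^ n) ∘L A ∘L (C ^ n))
        atTop (𝓝 L)) ↔
      ∃ A₁ K : H →L[ℂ] H, ContinuousLinearMap.adjoint C ∘L A₁ ∘L C = A₁ ∧
        IsCompactOperator K ∧ A = A₁ + K := by
  set Cad := ContinuousLinearMap.adjoint C with hCad
  have hadjpow : ∀ n : ℕ, Cad ^ n = ContinuousLinearMap.adjoint (C ^ n) := by
    intro n
    rw [hCad, ← ContinuousLinearMap.star_eq_adjoint, ← ContinuousLinearMap.star_eq_adjoint,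
      ← star_pow]
  have hCadn : ∀ n : ℕ, ‖Cad ^ n‖ ≤ 1 := by
    intro n
    rw [hadjpow n]
    calc ‖ContinuousLinearMap.adjoint (C ^ n)‖
        = ‖C ^ n‖ := LinearIsometryEquiv.norm_map ContinuousLinearMap.adjoint (C ^ n)
      _ ≤ 1 := hC n
  -- the Toeplitz condition propagates to all powers
  have hTopn : ∀ (B : H →L[ℂ] H), Cad * B * C = B → ∀ n, Cad ^ n * B * C ^ n = B := by
    intro B hB n
    induction n with
    | zero => simp
    | succ n ih =>
      have h1 : Cad ^ (n + 1) * B * C ^ (n + 1) = Cad ^ n * (Cad * B * C) * C ^ n := by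
        rw [pow_succ, pow_succ']
        simp [mul_assoc]
      rw [h1, hB, ih]
  constructor
  · rintro ⟨L, hL⟩
    have hL' : Tendsto (fun n : ℕ => Cad ^ n * A * C ^ n) atTop (𝓝 L) := hL
    -- `L` is Toeplitz
    have hTop : Cad * L * C = L := by
      have hcont : Continuous fun T : H →L[ℂ] H => Cad * T * C :=
        (continuous_mul_right C).comp (continuous_mul_left Cad)
      have h1 : Tendsto (fun n : ℕ => Cad * (Cad ^ n * A * C ^ n) * C) atTop
          (𝓝 (Cad * L * C)) := (hcont.tendsto L).comp hL'
      have h2 : (fun n : ℕ => Cad * (Cad ^ n * A * C ^ n) * C) =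
          fun n : ℕ => Cad ^ (n + 1) * A * C ^ (n + 1) := by
        funext n
        rw [pow_succ' Cad, pow_succ C]
        simp [mul_assoc]
      rw [h2] at h1
      have h3 : Tendsto (fun n : ℕ => Cad ^ (n + 1) * A * C ^ (n + 1)) atTop (𝓝 L) :=
        hL'.comp (tendsto_add_atTop_nat 1)
      exact tendsto_nhds_unique h1 h3
    have hLn : ∀ n, Cad ^ n * L * C ^ n = L := hTopn L hTop
    -- the middle terms tend to zero in norm
    have hdiff : Tendsto (fun n : ℕ => ‖Cad ^ n * (A - L) * C ^ n‖) atTop (𝓝 0) := by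
      have : ∀ n : ℕ, Cad ^ n * (A - L) * C ^ n = Cad ^ n * A * C ^ n - L := by
        intro n
        rw [mul_sub, sub_mul, hLn n]
      simp only [this]
      exact tendsto_iff_norm_sub_tendsto_zero.mp hL'
    -- compactness of `A - L`
    have hKcpt : IsCompactOperator (A - L) := by
      set D := A - L with hD
      set E : ℕ → H →L[ℂ] H := fun n =>
        ((1 : H →L[ℂ] H) - C ^ n * Cad ^ n) * D +
          (C ^ n * Cad ^ n) * D * ((1 : H →L[ℂ] H) - C ^ n * Cad ^ n) with hE
      have hEcpt : ∀ n, IsCompactOperator (E n) := by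
        intro n
        have hd : IsCompactOperator ((1 : H →L[ℂ] H) - C ^ n * Cad ^ n) := hdefect n
        have h1 : IsCompactOperator (((1 : H →L[ℂ] H) - C ^ n * Cad ^ n) * D) :=
          hd.comp_clm D
        have h2 : IsCompactOperator
            ((C ^ n * Cad ^ n) * D * ((1 : H →L[ℂ] H) - C ^ n * Cad ^ n)) :=
          hd.clm_comp ((C ^ n * Cad ^ n) * D)
        exact h1.add h2
      have hED : Tendsto E atTop (𝓝 D) := by
        rw [tendsto_iff_norm_sub_tendsto_zero]
        refine squeeze_zero (fun n => norm_nonneg _) (fun n => ?_) hdiff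
        have hEn : E n - D = -(C ^ n * (Cad ^ n * D * C ^ n) * Cad ^ n) := by
          rw [hE]
          noncomm_ring
        rw [hEn, norm_neg]
        exact sandwich_norm (hC n) (hCadn n)
      exact isCompactOperator_of_tendsto hED (Eventually.of_forall hEcpt)
    exact ⟨L, A - L, hTop, hKcpt, by abel⟩
  · rintro ⟨A₁, K, hA₁, hK, rfl⟩
    refine ⟨A₁, ?_⟩
    have hA₁n : ∀ n, Cad ^ n * A₁ * C ^ n = A₁ := hTopn A₁ hA₁
    have hkey : Tendsto (fun n : ℕ => ‖(Cad ^ n) ∘L K‖) atTop (𝓝 0) :=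
      norm_comp_compact_tendsto_zero (fun n => Cad ^ n) hCadn
        (fun f => by simpa using hCadj f) K hK
    have goal' : Tendsto (fun n : ℕ => Cad ^ n * (A₁ + K) * C ^ n) atTop (𝓝 A₁) := by
      rw [tendsto_iff_norm_sub_tendsto_zero]
      refine squeeze_zero (fun n => norm_nonneg _) (fun n => ?_) hkey
      have h1 : Cad ^ n * (A₁ + K) * C ^ n - A₁ = (Cad ^ n * K) * C ^ n := by
        rw [mul_add, add_mul, hA₁n n]
        abel
      rw [h1]
      calc ‖(Cad ^ n * K) * C ^ n‖ ≤ ‖Cad ^ n * K‖ * ‖C ^ n‖ := norm_mul_le _ _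
        _ ≤ ‖Cad ^ n * K‖ * 1 := by gcongr; exact hC n
        _ = ‖(Cad ^ n) ∘L K‖ := by rw [mul_one]; rfl
    exact goal'
end
end
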